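/- arXiv:2111.10529 — 2 statements merged into one kernel-verified Lean document; each statement's English description precedes it below -/
import Mathlib

section
/- Let (L|K,v) and (L(x)|L,v) be valued field extensions with vL = vK. If v(x−K) ≠ v(x−L), then there exists y ∈ L with v(x−y) > γ for all γ ∈ v(x−K), and v(x−K) = v(y−K). -/
variable {M : Type*} [Field M] {Γ : Type*} [AddCommGroup Γ] [LinearOrder Γ] [IsOrderedAddMonoid Γ]

def vxS (v : AddValuation M (WithTop Γ)) (x : M) (S : Set M) : Set (WithTop Γ) :=
  {g | ∃ c ∈ S, v (x - c) = g}

/-!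
Since `K ⊆ L`, `v(x−K) ⊆ v(x−L)`, so some `y ∈ L` has `v(x−y) ∉ v(x−K)`. If `v(x−y) < v(x−c)` for
some `c ∈ K`, then `v(x−y) = v(y−c) ∈ vL = vK`, say `v(x−y) = v c'` with `c' ∈ K`, and then
`v(x−(c+c')) = v c' = v(x−y)`, contradicting the choice of `y`. Hence `v(x−y) > v(x−K)`, and the
ultrametric triangle law gives `v(y−c) = v(x−c)` for every `c ∈ K`.
-/

namespace AddValuation

variable {R Γ₀ : Type*} [Ring R] [LinearOrderedAddCommMonoidWithTop Γ₀] (v : AddValuation R Γ₀)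

theorem map_sub_eq_of_lt_map_sub {x y c : R} (h : v (x - c) < v (x - y)) :
    v (y - c) = v (x - c) := by
  rw [show y - c = (y - x) + (x - c) by abel]
  exact v.map_add_eq_of_lt_right (by rwa [v.map_sub_swap y x])

end AddValuation

section vxS

variable (v : AddValuation M (WithTop Γ)) (x : M)

theorem vxS_mono {S T : Set M} (h : S ⊆ T) : vxS v x S ⊆ vxS v x T := by
  rintro g ⟨c, hc, rfl⟩
  exact ⟨c, h hc, rfl⟩

theorem vxS_eq_of_forall_lt {S : Set M} {y : M} (hlt : ∀ c ∈ S, v (x - c) < v (x - y)) :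
    vxS v x S = vxS v y S := by
  ext g
  constructor <;> rintro ⟨c, hc, rfl⟩
  · exact ⟨c, hc, v.map_sub_eq_of_lt_map_sub (hlt c hc)⟩
  · exact ⟨c, hc, (v.map_sub_eq_of_lt_map_sub (hlt c hc)).symm⟩

theorem map_mem_vxS_of_lt (K : AddSubgroup M) {c c' : M} (hc : c ∈ K) (hc' : c' ∈ K)
    (h : v c' < v (x - c)) : v c' ∈ vxS v x K := by
  refine ⟨c + c', K.add_mem hc hc', ?_⟩
  rw [sub_add_eq_sub_sub]
  exact v.map_sub_eq_of_lt_right h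

theorem lt_map_sub_of_notMem_vxS (K : AddSubgroup M) {y : M} (hy : v (x - y) ∉ vxS v x K)
    (hyK : ∀ c ∈ K, ∃ c' ∈ K, v c' = v (y - c)) (c : M) (hc : c ∈ K) :
    v (x - c) < v (x - y) := by
  rcases lt_trichotomy (v (x - c)) (v (x - y)) with h | h | h
  · exact h
  · exact absurd ⟨c, hc, h⟩ hy
  · obtain ⟨c', hc', hvc'⟩ := hyK c hc
    have hyc : v (y - c) = v (x - y) := by
      rw [v.map_sub_swap y c]
      exact v.map_sub_eq_of_lt_map_sub h
    rw [hyc] at hvc'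
    rw [← hvc'] at h hy
    exact absurd (map_mem_vxS_of_lt v x K hc hc' h) hy

end vxS

/-- Extensions `(L|K,v)` and `(L(x)|L,v)` with `vL = vK`: if `v(x−K) ≠ v(x−L)`,
then there is `y ∈ L` with `v(x−y) > γ` for all `γ ∈ v(x−K)`, and
`v(x−K) = v(y−K)`. -/
theorem exists_y_of_vxK_ne_vxL (K L : Subfield M) (hKL : K ≤ L)
    (v : AddValuation M (WithTop Γ)) (x : M)
    (hval : ∀ g : WithTop Γ, (∃ c ∈ L, v c = g) → ∃ c ∈ K, v c = g)
    (hne : vxS v x (K : Set M) ≠ vxS v x (L : Set M)) :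
    ∃ y ∈ L, (∀ c ∈ K, v (x - c) < v (x - y)) ∧
      vxS v x (K : Set M) = vxS v y (K : Set M) := by
  have hsub : vxS v x K ⊆ vxS v x L := vxS_mono v x hKL
  obtain ⟨_, ⟨y, hyL, rfl⟩, hy⟩ := Set.exists_of_ssubset (hsub.ssubset_of_ne hne)
  have hlt : ∀ c ∈ K, v (x - c) < v (x - y) :=
    lt_map_sub_of_notMem_vxS v x K.toAddSubgroup hy
      (fun c hc ↦ hval _ ⟨y - c, L.sub_mem hyL (hKL hc), rfl⟩)
  exact ⟨y, hyL, hlt, vxS_eq_of_forall_lt v x hlt⟩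
end

section
/- Let A be an immediate approximation type over (K,v), let (L|K,v) be an extension, and let x ∈ L. Then the following are equivalent: (a) appr_v(x,K) = A; (b) there is a cofinal subset S of supp A such that for every γ ∈ S there exists c ∈ A_γ with v(x−c) ≥ γ; (c) for every γ ∈ supp A there exists c ∈ A_γ with v(x−c) ≥ γ. -/
variable {L : Type*} [Field L] {Γ : Type*} [AddCommGroup Γ] [LinearOrder Γ]
  [IsOrderedAddMonoid Γ]

/-- An (abstract) approximation type over `(K,v)`: a full nest of closed and open
ultrametric balls of `K`, encoded by the (possibly empty) closed ball `closedB γ`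
and open ball `openB γ` of each radius `γ ∈ vK ∪ {∞}`. -/
structure ApproxType (K : Subfield L) (v : AddValuation L (WithTop Γ)) where
  closedB : WithTop Γ → Set L
  openB : WithTop Γ → Set L
  closed_ball : ∀ γ, (closedB γ).Nonempty →
    (∃ c ∈ K, v c = γ) ∧ ∀ b ∈ closedB γ, closedB γ = {a : L | a ∈ K ∧ γ ≤ v (a - b)}
  open_ball : ∀ γ, (openB γ).Nonempty →
    (∃ c ∈ K, v c = γ) ∧ γ ≠ ⊤ ∧
      ∀ b ∈ openB γ, openB γ = {a : L | a ∈ K ∧ γ < v (a - b)}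
  open_subset_closed : ∀ γ, openB γ ⊆ closedB γ
  full_closed : ∀ γ δ, γ ≤ δ → (∃ c ∈ K, v c = γ) → (closedB δ).Nonempty →
    closedB δ ⊆ closedB γ
  full_open : ∀ γ δ, γ < δ → γ ≠ ⊤ → (∃ c ∈ K, v c = γ) → (closedB δ).Nonempty →
    closedB δ ⊆ openB γ

namespace ApproxType

variable {K : Subfield L} {v : AddValuation L (WithTop Γ)}

/-- The support: the set of radii of the nonempty closed balls of `A`. -/
def supp (A : ApproxType K v) : Set (WithTop Γ) := {γ | (A.closedB γ).Nonempty}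

/-- The intersection of all balls of `A`. -/
def inter (A : ApproxType K v) : Set L :=
  (⋂ γ ∈ A.supp, A.closedB γ) ∩ (⋂ γ ∈ {γ | (A.openB γ).Nonempty}, A.openB γ)

/-- `A` is immediate: nonempty with empty total intersection. -/
def Immediate (A : ApproxType K v) : Prop := A.supp.Nonempty ∧ A.inter = ∅

/-- `appr_v(x,K) = A`: the supports coincide and the closed and open balls of `A`
are exactly those of the approximation type of `x` over `K`. -/
def Realizes (x : L) (A : ApproxType K v) : Prop :=
  (∀ γ : WithTop Γ, ((∃ c ∈ K, v c = γ) ∧ ∃ c ∈ K, γ ≤ v (x - c)) ↔ γ ∈ A.supp) ∧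
  ∀ γ ∈ A.supp, A.closedB γ = {c : L | c ∈ K ∧ γ ≤ v (x - c)} ∧
    A.openB γ = {c : L | c ∈ K ∧ γ < v (x - c)}

end ApproxType

/-! If every ball `A_γ` contains some `c` with `v(x - c) ≥ γ`, the ultrametric inequality
recentres `A_γ` at `x`, so the closed balls of `A` are those of `appr_v(x,K)`; as `supp A` has
no maximum, every open ball of `A` contains a smaller closed ball and is recentred as well.
The supports agree because a radius of `appr_v(x,K)` above all of `supp A` would have a centre
lying in every ball of `A`, against immediacy. A cofinal set of radii suffices since the balls
are nested. -/

namespace AddValuation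

variable {R : Type*} [Ring R] {Γ₀ : Type*} [LinearOrderedAddCommMonoidWithTop Γ₀]
  (v : AddValuation R Γ₀) {γ : Γ₀} {a b x : R}

theorem le_map_sub_iff_of_le (h : γ ≤ v (x - b)) : γ ≤ v (a - b) ↔ γ ≤ v (x - a) :=
  ⟨fun ha => by simpa using v.map_le_sub h ha, fun ha => by simpa using v.map_le_sub h ha⟩

theorem lt_map_sub_iff_of_lt (h : γ < v (x - b)) : γ < v (a - b) ↔ γ < v (x - a) := by
  constructor
  · intro ha
    rw [v.map_sub_swap] at ha
    simpa using v.map_lt_add h ha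
  · intro ha
    rw [v.map_sub_swap] at ha
    simpa using v.map_lt_add ha h

end AddValuation

namespace ApproxType

variable {K : Subfield L} {v : AddValuation L (WithTop Γ)} {A : ApproxType K v}
  {γ : WithTop Γ} {x : L}

theorem closedB_eq_of_mem {c : L} (hc : c ∈ A.closedB γ) (hcx : γ ≤ v (x - c)) :
    A.closedB γ = {a : L | a ∈ K ∧ γ ≤ v (x - a)} := by
  rw [(A.closed_ball γ ⟨c, hc⟩).2 c hc]
  ext a
  exact and_congr_right fun _ => v.le_map_sub_iff_of_le hcx

theorem openB_eq_of_mem {c : L} (hc : c ∈ A.openB γ) (hcx : γ < v (x - c)) :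
    A.openB γ = {a : L | a ∈ K ∧ γ < v (x - a)} := by
  rw [(A.open_ball γ ⟨c, hc⟩).2.2 c hc]
  ext a
  exact and_congr_right fun _ => v.lt_map_sub_iff_of_lt hcx

theorem mem_supp_of_openB_nonempty (h : (A.openB γ).Nonempty) : γ ∈ A.supp :=
  h.mono (A.open_subset_closed γ)

theorem Immediate.exists_gt (hA : A.Immediate) (hγ : γ ∈ A.supp) : ∃ δ ∈ A.supp, γ < δ := by
  by_contra! hmax
  -- a point of the smallest ball, taken open when possible, lies in every ball of `A`
  obtain ⟨b, hb, hbo⟩ : ∃ b ∈ A.closedB γ, (A.openB γ).Nonempty → b ∈ A.openB γ := by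
    by_cases ho : (A.openB γ).Nonempty
    · obtain ⟨b, hb⟩ := ho
      exact ⟨b, A.open_subset_closed γ hb, fun _ => hb⟩
    · obtain ⟨b, hb⟩ := hγ
      exact ⟨b, hb, fun h => absurd h ho⟩
  have hb_inter : b ∈ A.inter := by
    refine ⟨Set.mem_iInter₂.mpr fun δ hδ => ?_, Set.mem_iInter₂.mpr fun δ hδ => ?_⟩
    · exact A.full_closed δ γ (hmax δ hδ) (A.closed_ball δ hδ).1 hγ hb
    · obtain hlt | rfl := (hmax δ (mem_supp_of_openB_nonempty hδ)).lt_or_eq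
      · exact A.full_open δ γ hlt (A.open_ball δ hδ).2.1 (A.open_ball δ hδ).1 hγ hb
      · exact hbo hδ
  simp [hA.2] at hb_inter

theorem closedB_eq (hx : ∀ γ ∈ A.supp, ∃ c ∈ A.closedB γ, γ ≤ v (x - c))
    (hγ : γ ∈ A.supp) : A.closedB γ = {a : L | a ∈ K ∧ γ ≤ v (x - a)} := by
  obtain ⟨c, hc, hcx⟩ := hx γ hγ
  exact closedB_eq_of_mem hc hcx

theorem openB_eq (hx : ∀ γ ∈ A.supp, ∃ c ∈ A.closedB γ, γ ≤ v (x - c))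
    (hA : A.Immediate) (hγ : γ ∈ A.supp) :
    A.openB γ = {a : L | a ∈ K ∧ γ < v (x - a)} := by
  obtain ⟨δ, hδ, hγδ⟩ := hA.exists_gt hγ
  obtain ⟨c, hc, hcx⟩ := hx δ hδ
  exact openB_eq_of_mem (A.full_open γ δ hγδ hγδ.ne_top (A.closed_ball γ hγ).1 hδ hc)
    (hγδ.trans_le hcx)

theorem mem_supp_of_le (hx : ∀ γ ∈ A.supp, ∃ c ∈ A.closedB γ, γ ≤ v (x - c))
    (hA : A.Immediate) (hγK : ∃ c ∈ K, v c = γ) {d : L} (hd : d ∈ K)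
    (hdx : γ ≤ v (x - d)) : γ ∈ A.supp := by
  by_contra hγ
  have hlt : ∀ δ ∈ A.supp, δ < γ := fun δ hδ =>
    lt_of_not_ge fun hγδ => hγ (hδ.mono (A.full_closed γ δ hγδ hγK hδ))
  -- `d` is closer to `x` than every radius of `A`, so it lies in every ball of `A`
  have hd_inter : d ∈ A.inter := by
    refine ⟨Set.mem_iInter₂.mpr fun δ hδ => ?_, Set.mem_iInter₂.mpr fun δ hδ => ?_⟩
    · rw [closedB_eq hx hδ]
      exact ⟨hd, (hlt δ hδ).le.trans hdx⟩
    · have hδ' := mem_supp_of_openB_nonempty hδ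
      rw [openB_eq hx hA hδ']
      exact ⟨hd, (hlt δ hδ').trans_le hdx⟩
  simp [hA.2] at hd_inter

theorem realizes_iff (hA : A.Immediate) :
    Realizes x A ↔ ∀ γ ∈ A.supp, ∃ c ∈ A.closedB γ, γ ≤ v (x - c) := by
  refine ⟨fun hr γ hγ => ?_, fun hx => ⟨fun γ => ⟨?_, fun hγ => ?_⟩, fun γ hγ => ?_⟩⟩
  · obtain ⟨c, hc⟩ := hγ
    exact ⟨c, hc, ((hr.2 γ ⟨c, hc⟩).1 ▸ hc).2⟩
  · rintro ⟨hγK, d, hd, hdx⟩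
    exact mem_supp_of_le hx hA hγK hd hdx
  · obtain ⟨c, hc, hcx⟩ := hx γ hγ
    refine ⟨(A.closed_ball γ hγ).1, c, ?_, hcx⟩
    rw [closedB_eq hx hγ] at hc
    exact hc.1
  · exact ⟨closedB_eq hx hγ, openB_eq hx hA hγ⟩

theorem forall_exists_mem_closedB_of_cofinal {S : Set (WithTop Γ)} (hS : S ⊆ A.supp)
    (hcof : ∀ γ ∈ A.supp, ∃ δ ∈ S, γ ≤ δ) (hx : ∀ γ ∈ S, ∃ c ∈ A.closedB γ, γ ≤ v (x - c)) :
    ∀ γ ∈ A.supp, ∃ c ∈ A.closedB γ, γ ≤ v (x - c) := by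
  intro γ hγ
  obtain ⟨δ, hδ, hγδ⟩ := hcof γ hγ
  obtain ⟨c, hc, hcx⟩ := hx δ hδ
  exact ⟨c, A.full_closed γ δ hγδ (A.closed_ball γ hγ).1 (hS hδ) hc, hγδ.trans hcx⟩

end ApproxType

/-- For an immediate approximation type `A` and an element `x` of an extension,
TFAE: (a) `appr_v(x,K) = A`; (b) there is a cofinal subset `S` of `supp A` such
that for every `γ ∈ S` some `c ∈ A_γ` satisfies `v(x−c) ≥ γ`; (c) for every
`γ ∈ supp A` some `c ∈ A_γ` satisfies `v(x−c) ≥ γ`. -/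
theorem realizes_immediate_tfae (K : Subfield L) (v : AddValuation L (WithTop Γ))
    (A : ApproxType K v) (hA : A.Immediate) (x : L) :
    (ApproxType.Realizes x A ↔ ∀ γ ∈ A.supp, ∃ c ∈ A.closedB γ, γ ≤ v (x - c)) ∧
    ((∃ S ⊆ A.supp, (∀ γ ∈ A.supp, ∃ δ ∈ S, γ ≤ δ) ∧
        ∀ γ ∈ S, ∃ c ∈ A.closedB γ, γ ≤ v (x - c)) ↔
      ∀ γ ∈ A.supp, ∃ c ∈ A.closedB γ, γ ≤ v (x - c)) :=
  ⟨ApproxType.realizes_iff hA,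
    fun ⟨_, hS, hcof, hx⟩ => ApproxType.forall_exists_mem_closedB_of_cofinal hS hcof hx,
    fun hx => ⟨A.supp, subset_rfl, fun γ hγ => ⟨γ, hγ, le_rfl⟩, hx⟩⟩
end
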